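/- For every even k ≥ 2, P_{C_k}(x) = (½(√(1+4x)+1))^k + (½(√(1+4x)−1))^k for all x ≥ 0; in particular P_{C_k}(2) = 2^k + 1. -/

import Mathlib

open scoped Classical
open Polynomial

/-- `s` is an independent set of `G`. -/
def IsIndepFinset {V : Type*} (G : SimpleGraph V) (s : Finset V) : Prop :=
  ∀ ⦃v⦄, v ∈ s → ∀ ⦃w⦄, w ∈ s → ¬ G.Adj v w

/-- The independence polynomial of `G` restricted to independent sets contained in `A`
(so `indepPolyOn G Finset.univ` is the independence polynomial of `G`, and taking `A` to be
the set of vertices of maximum degree gives `P_{G*}`). -/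
noncomputable def indepPolyOn {V : Type*} [Fintype V] (G : SimpleGraph V)
    (A : Finset V) : Polynomial ℝ :=
  ∑ s ∈ A.powerset.filter (fun s => IsIndepFinset G s), (X : Polynomial ℝ) ^ s.card

/-- The independence polynomial `P_G(x) = Σ_k i_G(k) x^k`. -/
noncomputable def indepPoly {V : Type*} [Fintype V] (G : SimpleGraph V) : Polynomial ℝ :=
  indepPolyOn G Finset.univ

/-!
Splitting the independent sets according to whether they contain a vertex `v` gives
`I(G) = I(G - v) + x I(G - N[v])`. Applied at vertex `0` of `C_{n+2}`, and then repeatedly at the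
left end of the remaining arcs (which induce paths), this gives Fibonacci-type recurrences whose
characteristic roots satisfy `α + β = 1`, `α β = -x`: an arc of `ℓ` vertices has polynomial
`(α^(ℓ+2) - β^(ℓ+2)) / (α - β)` and the cycle has `α^(n+2) + β^(n+2)`. For `x ≥ 0` the roots are
`(1 ± √(1+4x))/2`, and an even power absorbs the sign of the second one.
-/

open Finset SimpleGraph

section IndepPoly

variable {V : Type*} (G : SimpleGraph V)

lemma isIndepFinset_insert {v : V} {s : Finset V} :
    IsIndepFinset G (insert v s) ↔ IsIndepFinset G s ∧ ∀ w ∈ s, ¬ G.Adj v w := by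
  simp only [IsIndepFinset, mem_insert]
  refine ⟨fun h => ⟨fun u hu w hw => h (.inr hu) (.inr hw), fun w hw => h (.inl rfl) (.inr hw)⟩,
    ?_⟩
  rintro ⟨hs, hv⟩ u (rfl | hu) w (rfl | hw)
  · exact G.loopless.irrefl _
  · exact hv w hw
  · exact fun h => hv u hu h.symm
  · exact hs hu hw

variable [Fintype V]

lemma indepPolyOn_empty : indepPolyOn G ∅ = 1 := by
  rw [indepPolyOn, powerset_empty, filter_singleton, if_pos (by simp [IsIndepFinset])]
  simp

theorem indepPolyOn_eq_erase_add_X_mul {A : Finset V} {v : V} (hv : v ∈ A) :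
    indepPolyOn G A =
      indepPolyOn G (A.erase v) + X * indepPolyOn G {w ∈ A | w ≠ v ∧ ¬ G.Adj v w} := by
  unfold indepPolyOn
  conv_lhs => rw [← insert_erase hv, sum_filter, sum_powerset_insert (notMem_erase v A)]
  rw [← sum_filter, ← sum_filter, mul_sum]
  congr 1
  have hsets : {t ∈ (A.erase v).powerset | IsIndepFinset G (insert v t)} =
      {t ∈ {w ∈ A | w ≠ v ∧ ¬ G.Adj v w}.powerset | IsIndepFinset G t} := by
    ext t
    simp only [mem_filter, mem_powerset, isIndepFinset_insert, subset_iff, mem_erase]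
    grind
  rw [hsets]
  refine sum_congr rfl fun t ht => ?_
  have hvt : v ∉ t := fun h => by simpa using (mem_powerset.1 (mem_filter.1 ht).1) h
  rw [card_insert_of_notMem hvt, pow_succ']

end IndepPoly

theorem cycleGraph_adj_iff_val {n : ℕ} {u w : Fin (n + 2)} :
    (cycleGraph (n + 2)).Adj u w ↔
      u.val + 1 = w.val ∨ w.val + 1 = u.val ∨ (u.val = 0 ∧ w.val = n + 1) ∨
        (w.val = 0 ∧ u.val = n + 1) := by
  rw [cycleGraph_adj, sub_eq_iff_eq_add', sub_eq_iff_eq_add', Fin.ext_iff, Fin.ext_iff,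
    Fin.val_add_one, Fin.val_add_one]
  have := u.isLt
  have := w.isLt
  split_ifs with h1 h2 h2 <;> simp only [Fin.ext_iff, Fin.val_last] at h1 h2 <;> omega

def cycleArc (n a b : ℕ) : Finset (Fin (n + 2)) := {v | a ≤ v.val ∧ v.val < b}

lemma cycleArc_eq_empty {n a b : ℕ} (h : b ≤ a) : cycleArc n a b = ∅ :=
  filter_false_of_mem fun v _ => by omega

theorem indepPolyOn_cycleArc {n a b : ℕ} (ha : 1 ≤ a) (hab : a < b) (hb : b ≤ n + 2) :
    indepPolyOn (cycleGraph (n + 2)) (cycleArc n a b) =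
      indepPolyOn (cycleGraph (n + 2)) (cycleArc n (a + 1) b) +
        X * indepPolyOn (cycleGraph (n + 2)) (cycleArc n (a + 2) b) := by
  have hmem : (⟨a, by omega⟩ : Fin (n + 2)) ∈ cycleArc n a b :=
    mem_filter.2 ⟨mem_univ _, le_rfl, hab⟩
  rw [indepPolyOn_eq_erase_add_X_mul _ hmem]
  congr 3 <;> ext w <;>
    simp only [cycleArc, mem_erase, mem_filter, mem_univ, true_and, ne_eq, Fin.ext_iff,
      cycleGraph_adj_iff_val] <;> omega

theorem indepPoly_cycleGraph (n : ℕ) :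
    indepPoly (cycleGraph (n + 2)) =
      indepPolyOn (cycleGraph (n + 2)) (cycleArc n 1 (n + 2)) +
        X * indepPolyOn (cycleGraph (n + 2)) (cycleArc n 2 (n + 1)) := by
  rw [indepPoly, indepPolyOn_eq_erase_add_X_mul _ (mem_univ 0)]
  congr 3 <;> ext w <;>
    simp only [cycleArc, mem_erase, mem_filter, mem_univ, true_and, ne_eq, Fin.ext_iff,
      Fin.val_zero, cycleGraph_adj_iff_val] <;> grind

section ClosedForm

variable {α β x : ℝ}

theorem sub_mul_eval_indepPolyOn_cycleArc (hsum : α + β = 1) (hprod : α * β = -x) {n a : ℕ}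
    (ℓ : ℕ) (ha : 1 ≤ a) (hℓ : a + ℓ ≤ n + 2) :
    (α - β) * (indepPolyOn (cycleGraph (n + 2)) (cycleArc n a (a + ℓ))).eval x =
      α ^ (ℓ + 2) - β ^ (ℓ + 2) := by
  induction ℓ using Nat.twoStepInduction generalizing a with
  | zero =>
    rw [add_zero, cycleArc_eq_empty le_rfl, indepPolyOn_empty, eval_one]
    linear_combination -(α - β) * hsum
  | one =>
    rw [indepPolyOn_cycleArc ha (by omega) hℓ, cycleArc_eq_empty le_rfl,
      cycleArc_eq_empty (by omega), indepPolyOn_empty]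
    simp only [eval_add, eval_mul, eval_X, eval_one]
    linear_combination (α - β) * hprod - (α - β) * (α + β + 1) * hsum
  | more ℓ ih₀ ih₁ =>
    have h₁ := ih₁ (a := a + 1) (by omega) (by omega)
    have h₀ := ih₀ (a := a + 2) (by omega) (by omega)
    rw [show a + 1 + (ℓ + 1) = a + (ℓ + 2) by ring] at h₁
    rw [show a + 2 + ℓ = a + (ℓ + 2) by ring] at h₀
    rw [indepPolyOn_cycleArc ha (by omega) hℓ, eval_add, eval_mul, eval_X]
    linear_combination h₁ + x * h₀ - (α ^ (ℓ + 3) - β ^ (ℓ + 3)) * hsum +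
      (α ^ (ℓ + 2) - β ^ (ℓ + 2)) * hprod

theorem eval_indepPoly_cycleGraph (hsum : α + β = 1) (hprod : α * β = -x) (hne : α ≠ β)
    (n : ℕ) :
    (indepPoly (cycleGraph (n + 2))).eval x = α ^ (n + 2) + β ^ (n + 2) := by
  refine mul_left_cancel₀ (sub_ne_zero.2 hne) ?_
  have h₁ := sub_mul_eval_indepPolyOn_cycleArc hsum hprod (a := 1) (n := n) (n + 1) le_rfl
    (by omega)
  rw [show 1 + (n + 1) = n + 2 by ring] at h₁
  rw [indepPoly_cycleGraph, eval_add, eval_mul, eval_X]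
  cases n with
  | zero =>
    rw [cycleArc_eq_empty (show 0 + 1 ≤ 2 by omega), indepPolyOn_empty, eval_one]
    linear_combination h₁ + (α - β) * hprod
  | succ n =>
    have h₀ := sub_mul_eval_indepPolyOn_cycleArc hsum hprod (a := 2) (n := n + 1) n le_add_self
      (by omega)
    rw [add_comm 2 n] at h₀
    linear_combination h₁ + x * h₀ + (α ^ (n + 2) - β ^ (n + 2)) * hprod

end ClosedForm

/-- For every even `k ≥ 2` and all real `x ≥ 0`,
`P_{C_k}(x) = (½(√(1+4x)+1))^k + (½(√(1+4x)-1))^k`; in particular `P_{C_k}(2) = 2^k + 1`. -/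
theorem stmt10 (k : ℕ) (hk : 2 ≤ k) (hke : Even k) :
    (∀ x : ℝ, 0 ≤ x →
      (indepPoly (SimpleGraph.cycleGraph k)).eval x
        = ((Real.sqrt (1 + 4 * x) + 1) / 2) ^ k + ((Real.sqrt (1 + 4 * x) - 1) / 2) ^ k) ∧
    (indepPoly (SimpleGraph.cycleGraph k)).eval (2 : ℝ) = 2 ^ k + 1 := by
  obtain ⟨n, rfl⟩ : ∃ n, k = n + 2 := ⟨k - 2, by omega⟩
  have hformula (x : ℝ) (hx : 0 ≤ x) : (indepPoly (cycleGraph (n + 2))).eval x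
      = ((√(1 + 4 * x) + 1) / 2) ^ (n + 2) + ((√(1 + 4 * x) - 1) / 2) ^ (n + 2) := by
    have hsq : √(1 + 4 * x) ^ 2 = 1 + 4 * x := Real.sq_sqrt (by linarith)
    have hpos : 0 < √(1 + 4 * x) := Real.sqrt_pos.2 (by linarith)
    rw [← hke.neg_pow ((√(1 + 4 * x) - 1) / 2)]
    exact eval_indepPoly_cycleGraph (by ring) (by linear_combination -hsq / 4)
      (fun h => by linarith) n
  refine ⟨hformula, ?_⟩
  rw [hformula 2 zero_le_two, show (1 + 4 * 2 : ℝ) = 3 ^ 2 by norm_num, Real.sqrt_sq three_pos.le]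
  norm_num
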